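/- arXiv:1711.04983 — 6 statements merged into one kernel-verified Lean document; each statement's English description precedes it below -/
import Mathlib

section
/- Let r and n be positive natural numbers and let B be an r × n matrix over ZMod 2 that has at least one zero column (i.e. there exists j₀ : Fin n with B i j₀ = 0 for all i). Then there exist an n × n matrix A over ZMod 2 that is strictly upper triangular (A i j = 0 whenever j ≤ i) and a permutation σ of Fin n such that for every c : Fin n → ZMod 2, one has ∑ j, c j • (column σ(j) of B) = 0 if and only if ∑ j, c j • (column j of A) = 0. In other words, the columns of B (reindexed by σ) and the columns of A satisfy exactly the same linear dependencies, so A and B represent isomorphic binary matroids. -/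
/-!
Reorder the columns so that the zero column comes first, followed by columns `b₀, …, b_{d-1}`
forming a basis of the column space, and then the remaining ones. Taking coordinates with respect
to `b`, padded with zeros to length `n`, is injective on the column space, so it preserves all
linear dependencies among the columns. It sends column `k + 1` to the unit vector `e_k`, and
every column to a vector supported on the first `d` rows; since the zero column forces `d < n`,
the resulting matrix is strictly upper triangular.
-/

open Function Submodule

section

variable {R M N : Type*} [Semiring R] [AddCommMonoid M] [Module R M] [AddCommMonoid N] [Module R N]

theorem sum_smul_map_eq_zero_iff {ι : Type*} [Fintype ι] {W : Submodule R M} (f : W →ₗ[R] N)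
    (hf : Injective f) (x : ι → M) (hx : ∀ j, x j ∈ W) (c : ι → R) :
    ∑ j, c j • f ⟨x j, hx j⟩ = 0 ↔ ∑ j, c j • x j = 0 := by
  simp_rw [← map_smul, ← map_sum, map_eq_zero_iff f hf, ← ZeroMemClass.coe_eq_zero,
    Submodule.coe_sum, Submodule.coe_smul]

end

section

variable {K V : Type*} [DivisionRing K] [AddCommGroup V] [Module K V]

theorem exists_subfamily_basis_span_range {n : ℕ} (v : Fin n → V) :
    ∃ (d : ℕ) (idx : Fin d → Fin n) (b : Module.Basis (Fin d) K (span K (Set.range v))),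
      Injective idx ∧ ∀ k, (b k : V) = v (idx k) := by
  have := Module.Finite.span_of_finite K (Set.finite_range v)
  obtain ⟨f, hf_mem, hf_span, hf_li⟩ := Submodule.exists_fun_fin_finrank_span_eq K (Set.range v)
  choose idx hidx using hf_mem
  refine ⟨_, idx, (Module.Basis.span hf_li).map (LinearEquiv.ofEq _ _ hf_span), ?_, ?_⟩
  · exact fun k l h => hf_li.injective (by rw [← hidx k, ← hidx l, h])
  · exact fun k => by simp [hidx k]

theorem exists_perm_zero_then_basis {n : ℕ} (v : Fin n → V) {j₀ : Fin n} (hj₀ : v j₀ = 0) :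
    ∃ (d : ℕ) (hd : d + 1 ≤ n) (σ : Equiv.Perm (Fin n))
      (b : Module.Basis (Fin d) K (span K (Set.range v))),
      v (σ (Fin.castLE hd 0)) = 0 ∧ ∀ k, (b k : V) = v (σ (Fin.castLE hd k.succ)) := by
  obtain ⟨d, idx, b, hidx, hb⟩ := exists_subfamily_basis_span_range (K := K) v
  have hj₀_notMem : j₀ ∉ Set.range idx := by
    rintro ⟨k, rfl⟩
    exact b.ne_zero k (Subtype.ext (by simpa [hb k] using hj₀))
  have hcons : Injective (Fin.cons j₀ idx : Fin (d + 1) → Fin n) :=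
    Fin.cons_injective_iff.mpr ⟨hj₀_notMem, hidx⟩
  have hd : d + 1 ≤ n := Fin.le_of_injective _ hcons
  obtain ⟨σ, hσ⟩ := Equiv.Perm.exists_extending_pair _ _ (Fin.castLE_injective hd) hcons
  refine ⟨d, hd, σ, b, by simpa [hσ] using hj₀, fun k => by simp [hσ, hb k]⟩

namespace Module.Basis

variable {W : Type*} [AddCommGroup W] [Module K W] {d n : ℕ} (b : Basis (Fin d) K W) (h : d ≤ n)

noncomputable def paddedRepr : W →ₗ[K] Fin n → K :=
  Finsupp.lcoeFun ∘ₗ Finsupp.lmapDomain K K (Fin.castLE h) ∘ₗ b.repr.toLinearMap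

theorem paddedRepr_injective : Function.Injective (b.paddedRepr h) :=
  DFunLike.coe_injective.comp <| (Finsupp.mapDomain_injective (Fin.castLE_injective h)).comp
    b.repr.injective

theorem paddedRepr_apply_of_le (w : W) {i : Fin n} (hi : d ≤ i) :
    b.paddedRepr h w i = 0 :=
  Finsupp.mapDomain_of_notMem_range _ _ fun ⟨k, hk⟩ => absurd hi (by simp [← hk])

theorem paddedRepr_self (k : Fin d) :
    b.paddedRepr h (b k) = Pi.single (Fin.castLE h k) 1 := by
  simp [paddedRepr, Finsupp.single_eq_pi_single]

end Module.Basis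

theorem exists_perm_injective_linearMap_strictUpper {n : ℕ} (v : Fin n → V) {j₀ : Fin n}
    (hj₀ : v j₀ = 0) :
    ∃ (σ : Equiv.Perm (Fin n)) (L : span K (Set.range v) →ₗ[K] Fin n → K), Injective L ∧
      ∀ i j, j ≤ i → L ⟨v (σ j), subset_span (Set.mem_range_self _)⟩ i = 0 := by
  obtain ⟨d, hd, σ, b, hzero, hbasis⟩ := exists_perm_zero_then_basis (K := K) v hj₀
  refine ⟨σ, b.paddedRepr (by omega), b.paddedRepr_injective _, fun i j hji => ?_⟩
  rcases lt_or_ge d j with hdj | hjd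
  · exact b.paddedRepr_apply_of_le _ _ (by omega)
  obtain ⟨j', rfl⟩ : ∃ j' : Fin (d + 1), Fin.castLE hd j' = j := ⟨⟨j, by omega⟩, rfl⟩
  cases j' using Fin.cases with
  | zero =>
    rw [show (⟨_, _⟩ : span K (Set.range v)) = 0 from Subtype.ext hzero, map_zero, Pi.zero_apply]
  | succ k =>
    rw [show (⟨_, _⟩ : span K (Set.range v)) = b k from Subtype.ext (hbasis k).symm,
      b.paddedRepr_self, Pi.single_apply, if_neg]
    rintro rfl
    simp [Fin.le_def] at hji

end

theorem exists_strictly_upper_triangular_same_dependencies_general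
    (r n : ℕ)
    (B : Matrix (Fin r) (Fin n) (ZMod 2))
    (hzero : ∃ j₀ : Fin n, ∀ i : Fin r, B i j₀ = 0) :
    ∃ (A : Matrix (Fin n) (Fin n) (ZMod 2)) (σ : Equiv.Perm (Fin n)),
      (∀ i j : Fin n, j ≤ i → A i j = 0) ∧
      ∀ c : Fin n → ZMod 2,
        (∑ j : Fin n, c j • (fun i : Fin r => B i (σ j))) = 0 ↔
        (∑ j : Fin n, c j • (fun i : Fin n => A i j)) = 0 := by
  obtain ⟨j₀, hj₀⟩ := hzero
  obtain ⟨σ, L, hL, hupper⟩ :=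
    exists_perm_injective_linearMap_strictUpper (K := ZMod 2) B.transpose (funext hj₀)
  refine ⟨.of fun i j => L ⟨B.transpose (σ j), subset_span (Set.mem_range_self _)⟩ i, σ, hupper,
    fun c => (sum_smul_map_eq_zero_iff L hL _ _ c).symm⟩

theorem exists_strictly_upper_triangular_same_dependencies
    (r n : ℕ) (hr : 0 < r) (hn : 0 < n)
    (B : Matrix (Fin r) (Fin n) (ZMod 2))
    (hzero : ∃ j₀ : Fin n, ∀ i : Fin r, B i j₀ = 0) :
    ∃ (A : Matrix (Fin n) (Fin n) (ZMod 2)) (σ : Equiv.Perm (Fin n)),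
      (∀ i j : Fin n, j ≤ i → A i j = 0) ∧
      ∀ c : Fin n → ZMod 2,
        (∑ j : Fin n, c j • (fun i : Fin r => B i (σ j))) = 0 ↔
        (∑ j : Fin n, c j • (fun i : Fin n => A i j)) = 0 :=
  exists_strictly_upper_triangular_same_dependencies_general r n B hzero
end

section
/- Let n be a natural number and let A be an n × n matrix over ZMod 2 that is strictly upper triangular (A i j = 0 whenever j ≤ i). Then for any two disjoint finite subsets S and T of Fin n, the family of vectors in (Fin n → ZMod 2) consisting of the standard basis vectors e_i = Pi.single i 1 for i ∈ S, together with the columns of the matrix 1 + Aᵀ indexed by j ∈ T (i.e. the vectors (fun k => (1 + Aᵀ) k j) for j ∈ T), is linearly independent over ZMod 2. -/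
namespace Matrix

variable {ι R : Type*} [Fintype ι] [LinearOrder ι] [DecidableEq ι] [CommRing R]

theorem det_one_add_diagonal_mul_of_strictlyUpper (A : Matrix ι ι R)
    (hA : ∀ i j, j ≤ i → A i j = 0) (d : ι → R) : (1 + diagonal d * A).det = 1 := by
  have hupper : (1 + diagonal d * A).IsUpperTriangular :=
    blockTriangular_one.add ((blockTriangular_diagonal d).mul fun i j hji => hA i j hji.le)
  rw [det_of_isUpperTriangular hupper]
  exact Finset.prod_eq_one fun i _ => by simp [hA i i le_rfl]

theorem linearIndependent_rows_one_add_diagonal_mul_of_strictlyUpper (A : Matrix ι ι R)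
    (hA : ∀ i j, j ≤ i → A i j = 0) (d : ι → R) :
    LinearIndependent R (1 + diagonal d * A).row :=
  linearIndependent_rows_of_isUnit <| (isUnit_iff_isUnit_det _).mpr <|
    (det_one_add_diagonal_mul_of_strictlyUpper A hA d).symm ▸ isUnit_one

end Matrix

open Matrix in
theorem real_bott_characteristic_nonsingular
    (n : ℕ) (A : Matrix (Fin n) (Fin n) (ZMod 2))
    (hA : ∀ i j : Fin n, j ≤ i → A i j = 0)
    (S T : Finset (Fin n)) (hST : Disjoint S T) :
    LinearIndependent (ZMod 2)
      (Sum.elim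
        (fun i : ↥S => Pi.single (i : Fin n) (1 : ZMod 2))
        (fun j : ↥T => fun k : Fin n => (1 + A.transpose) k (j : Fin n))) := by
  classical
  -- Row `j` of `C` is `e_j` for `j ∉ T` and column `j` of `1 + Aᵀ` for `j ∈ T`.
  set C := 1 + diagonal (fun j => if j ∈ T then 1 else 0) * A
  have hinj : Function.Injective (Sum.elim (Subtype.val : S → Fin n) (Subtype.val : T → Fin n)) :=
    Subtype.val_injective.sumElim Subtype.val_injective
      fun i j hij => Finset.disjoint_left.mp hST i.2 (hij ▸ j.2)
  have hrows : Sum.elim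
        (fun i : ↥S => Pi.single (i : Fin n) (1 : ZMod 2))
        (fun j : ↥T => fun k : Fin n => (1 + A.transpose) k (j : Fin n)) =
      C.row ∘ Sum.elim Subtype.val Subtype.val := by
    funext x k
    rcases x with ⟨i, hi⟩ | ⟨j, hj⟩
    · have hiT : i ∉ T := Finset.disjoint_left.mp hST hi
      simp [C, hiT, one_apply, Pi.single_apply, eq_comm]
    · simp [C, hj, one_apply, eq_comm]
  rw [hrows]
  exact (linearIndependent_rows_one_add_diagonal_mul_of_strictlyUpper A hA _).comp _ hinj
end

section
/- Let R be a commutative ring in which 2 is a unit, let m be a natural number, and let K be a set of subsets of Fin m that contains the empty set and is closed under taking subsets (an abstract simplicial complex on [m]). Let 𝓡^K denote the quotient of the free (noncommutative) R-algebra on 2m generators u_1,…,u_m, t_1,…,t_m by the two-sided ideal generated by the elements u_i u_i, u_i t_i − u_i, t_i u_i + u_i, t_i t_i − 1 for all i, the elements u_i u_j + u_j u_i, u_i t_j − t_j u_i, t_i t_j − t_j t_i for all i ≠ j, and the square-free monomials u_{i_1} u_{i_2} ⋯ u_{i_k} (with i_1 < i_2 < ⋯ < i_k) for every subset {i_1,…,i_k}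 of Fin m that is not a member of K. Then 𝓡^K is a free R-module; more precisely, the images in 𝓡^K of the monomials u_σ t_{ω∖σ} := u_{i_1}⋯u_{i_k} · t_{j_1}⋯t_{j_l}, where σ = {i_1 < ⋯ < i_k} and ω∖σ = {j_1 < ⋯ < j_l} and the indexing pairs range over all σ ⊆ ω ⊆ Fin m with σ ∈ K, form a basis of 𝓡^K as an R-module. -/
noncomputable section

variable (R : Type*) [CommRing R] (m : ℕ)

/-- The generator `u_i` in the free `R`-algebra on `2m` generators. -/
def genU (i : Fin m) : FreeAlgebra R (Fin m ⊕ Fin m) :=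
  FreeAlgebra.ι R (Sum.inl i)

/-- The generator `t_i` in the free `R`-algebra on `2m` generators. -/
def genT (i : Fin m) : FreeAlgebra R (Fin m ⊕ Fin m) :=
  FreeAlgebra.ι R (Sum.inr i)

/-- The square-free ordered monomial `u_τ = u_{a_1} ⋯ u_{a_r}` for
`τ = {a_1 < ⋯ < a_r}`. -/
def uMon (τ : Finset (Fin m)) : FreeAlgebra R (Fin m ⊕ Fin m) :=
  ((τ.sort (· ≤ ·)).map (genU R m)).prod

/-- The square-free ordered monomial `t_τ = t_{a_1} ⋯ t_{a_r}` for
`τ = {a_1 < ⋯ < a_r}`. -/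
def tMon (τ : Finset (Fin m)) : FreeAlgebra R (Fin m ⊕ Fin m) :=
  ((τ.sort (· ≤ ·)).map (genT R m)).prod

/-- The set of defining relators of `𝓡^K`: the relations among the `u_i, t_i`
together with the Stanley–Reisner relations associated to the non-faces of `K`. -/
def relators (K : Set (Finset (Fin m))) : Set (FreeAlgebra R (Fin m ⊕ Fin m)) :=
  (⋃ i : Fin m,
      {genU R m i * genU R m i,
       genU R m i * genT R m i - genU R m i,
       genT R m i * genU R m i + genU R m i,
       genT R m i * genT R m i - 1}) ∪
  (⋃ (i : Fin m) (j : Fin m) (_ : i ≠ j),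
      {genU R m i * genU R m j + genU R m j * genU R m i,
       genU R m i * genT R m j - genT R m j * genU R m i,
       genT R m i * genT R m j - genT R m j * genT R m i}) ∪
  {x | ∃ σ : Finset (Fin m), σ ∉ K ∧ x = uMon R m σ}

/-- The relation whose induced ring congruence quotients the free algebra by the
two-sided ideal generated by the relators. -/
def relRK (K : Set (Finset (Fin m))) :
    FreeAlgebra R (Fin m ⊕ Fin m) → FreeAlgebra R (Fin m ⊕ Fin m) → Prop :=
  fun a b => a ∈ relators R m K ∧ b = 0

/-- The algebra `𝓡^K`, the quotient of the free algebra by the two-sided ideal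
generated by the relators. -/
def RK (K : Set (Finset (Fin m))) : Type _ :=
  RingQuot (relRK R m K)

instance (K : Set (Finset (Fin m))) : Ring (RK R m K) := by
  unfold RK; infer_instance

instance (K : Set (Finset (Fin m))) : Algebra R (RK R m K) := by
  unfold RK; infer_instance

/-- The quotient map onto `𝓡^K`. -/
def mkRK (K : Set (Finset (Fin m))) :
    FreeAlgebra R (Fin m ⊕ Fin m) →ₐ[R] RK R m K :=
  RingQuot.mkAlgHom R (relRK R m K)

/-!
The monomials span `𝓡^K`: their span contains `1 = u_∅ t_∅` and is stable under left
multiplication by every generator, because the relations move `u_i` or `t_i` into place and turn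
a monomial into a multiple of another monomial or into `0` (`u_σ = 0` for `σ ∉ K`, and
`u_i t_i = u_i` absorbs a factor `t_i` once `u_i` is present).

They are linearly independent because `𝓡^K` acts on the free module with basis `e_(σ, ω)` through
the formulas that left multiplication by `u_i` and `t_i` gives on `u_σ t_{ω ∖ σ}`: the relations
hold on basis vectors, and `u_σ t_{ω ∖ σ}` sends `e_(∅, ∅)` to `e_(σ, ω)`.
-/

open scoped symmDiff

theorem List.Perm.exists_prod_map_eq_smul {R A ι : Type*} [CommSemiring R] [Semiring A]
    [Algebra R A] {f : ι → A} (hf : ∀ x y, ∃ c : R, f x * f y = c • (f y * f x))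
    {l l' : List ι} (h : l.Perm l') : ∃ c : R, (l.map f).prod = c • (l'.map f).prod := by
  induction h with
  | nil => exact ⟨1, by simp⟩
  | cons x _ ih =>
    obtain ⟨c, hc⟩ := ih
    exact ⟨c, by simp [hc]⟩
  | swap x y l =>
    obtain ⟨c, hc⟩ := hf y x
    exact ⟨c, by simp only [List.map_cons, List.prod_cons, ← mul_assoc, hc, smul_mul_assoc]⟩
  | trans _ _ ih₁ ih₂ =>
    obtain ⟨c₁, hc₁⟩ := ih₁
    obtain ⟨c₂, hc₂⟩ := ih₂
    exact ⟨c₁ * c₂, by rw [hc₁, hc₂, smul_smul]⟩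

theorem Finset.sort_insert_perm {α : Type*} [LinearOrder α] {a : α} {s : Finset α}
    (ha : a ∉ s) : ((insert a s).sort (· ≤ ·)).Perm (a :: s.sort (· ≤ ·)) :=
  List.perm_of_nodup_nodup_toFinset_eq (Finset.sort_nodup _ _)
    (List.nodup_cons.2 ⟨by simpa using ha, Finset.sort_nodup _ _⟩) (by ext; simp)

theorem Finset.sort_perm_cons_sort_erase {α : Type*} [LinearOrder α] {a : α} {s : Finset α}
    (ha : a ∈ s) : (s.sort (· ≤ ·)).Perm (a :: (s.erase a).sort (· ≤ ·)) := by
  simpa [Finset.insert_erase ha] using Finset.sort_insert_perm (Finset.notMem_erase a s)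

theorem Finset.insert_symmDiff_singleton_self {α : Type*} [DecidableEq α] (a : α) (s : Finset α) :
    insert a (s ∆ {a}) = insert a s := by
  ext x; by_cases x = a <;> simp [*, Finset.mem_symmDiff]

theorem Finset.insert_symmDiff_singleton_of_ne {α : Type*} [DecidableEq α] {a b : α}
    (hab : a ≠ b) (s : Finset α) : insert a (s ∆ {b}) = insert a s ∆ {b} := by
  ext x; by_cases x = a <;> simp [*, Finset.mem_symmDiff]

theorem Submodule.span_eq_top_of_ι_mul_mem {R X A : Type*} [CommSemiring R] [Semiring A]
    [Algebra R A] {f : FreeAlgebra R X →ₐ[R] A} (hf : Function.Surjective f) {T : Set A}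
    (h1 : 1 ∈ span R T) (hmul : ∀ x, ∀ t ∈ T, f (FreeAlgebra.ι R x) * t ∈ span R T) :
    span R T = ⊤ := by
  have hstable : ∀ a, span R T ≤ (span R T).comap (LinearMap.mulLeft R (f a)) := by
    intro a
    induction a using FreeAlgebra.induction with
    | grade0 r =>
      intro s hs
      simpa [Algebra.algebraMap_eq_smul_one] using smul_mem _ r hs
    | grade1 x => exact span_le.2 (hmul x)
    | mul a b ha hb =>
      intro s hs
      simpa [mul_assoc] using mem_comap.1 (ha (hb hs))
    | add a b ha hb =>
      intro s hs
      simpa [add_mul] using add_mem (mem_comap.1 (ha hs)) (mem_comap.1 (hb hs))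
  refine eq_top_iff'.2 fun y => ?_
  obtain ⟨a, rfl⟩ := hf y
  simpa using hstable a h1

namespace RK

variable {R m} {K : Set (Finset (Fin m))}

variable (R K) in
def u (i : Fin m) : RK R m K := mkRK R m K (genU R m i)

variable (R K) in
def t (i : Fin m) : RK R m K := mkRK R m K (genT R m i)

theorem mkRK_eq_zero_of_mem_relators {x : FreeAlgebra R (Fin m ⊕ Fin m)}
    (hx : x ∈ relators R m K) : mkRK R m K x = 0 := by
  have h := RingQuot.mkAlgHom_rel R (s := relRK R m K) ⟨hx, rfl⟩
  rwa [map_zero] at h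

theorem mem_relators_of_self {i : Fin m} {x : FreeAlgebra R (Fin m ⊕ Fin m)}
    (hx : x ∈ ({genU R m i * genU R m i, genU R m i * genT R m i - genU R m i,
      genT R m i * genU R m i + genU R m i, genT R m i * genT R m i - 1} : Set _)) :
    x ∈ relators R m K :=
  Or.inl (Or.inl (Set.mem_iUnion.2 ⟨i, hx⟩))

theorem mem_relators_of_ne {i j : Fin m} (hij : i ≠ j) {x : FreeAlgebra R (Fin m ⊕ Fin m)}
    (hx : x ∈ ({genU R m i * genU R m j + genU R m j * genU R m i,
      genU R m i * genT R m j - genT R m j * genU R m i,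
      genT R m i * genT R m j - genT R m j * genT R m i} : Set _)) :
    x ∈ relators R m K :=
  Or.inl (Or.inr (Set.mem_iUnion₂.2 ⟨i, j, Set.mem_iUnion.2 ⟨hij, hx⟩⟩))

theorem u_mul_self (i : Fin m) : u R K i * u R K i = 0 := by
  have h := mkRK_eq_zero_of_mem_relators (K := K)
    (mem_relators_of_self (i := i) (x := genU R m i * genU R m i) (by simp))
  simpa [u] using h

theorem u_mul_t_self (i : Fin m) : u R K i * t R K i = u R K i := by
  have h := mkRK_eq_zero_of_mem_relators (K := K)
    (mem_relators_of_self (i := i) (x := genU R m i * genT R m i - genU R m i) (by simp))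
  simpa [u, t, sub_eq_zero] using h

theorem t_mul_u_self (i : Fin m) : t R K i * u R K i = -u R K i := by
  have h := mkRK_eq_zero_of_mem_relators (K := K)
    (mem_relators_of_self (i := i) (x := genT R m i * genU R m i + genU R m i) (by simp))
  simpa [u, t, add_eq_zero_iff_eq_neg] using h

theorem t_mul_self (i : Fin m) : t R K i * t R K i = 1 := by
  have h := mkRK_eq_zero_of_mem_relators (K := K)
    (mem_relators_of_self (i := i) (x := genT R m i * genT R m i - 1) (by simp))
  simpa [t, sub_eq_zero] using h

theorem u_mul_u_of_ne {i j : Fin m} (hij : i ≠ j) :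
    u R K i * u R K j = -(u R K j * u R K i) := by
  have h := mkRK_eq_zero_of_mem_relators (K := K)
    (mem_relators_of_ne hij (x := genU R m i * genU R m j + genU R m j * genU R m i) (by simp))
  simpa [u, add_eq_zero_iff_eq_neg] using h

theorem commute_u_t_of_ne {i j : Fin m} (hij : i ≠ j) : Commute (u R K i) (t R K j) := by
  have h := mkRK_eq_zero_of_mem_relators (K := K)
    (mem_relators_of_ne hij (x := genU R m i * genT R m j - genT R m j * genU R m i) (by simp))
  simpa [Commute, SemiconjBy, u, t, sub_eq_zero] using h

theorem commute_t_t (i j : Fin m) : Commute (t R K i) (t R K j) := by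
  rcases eq_or_ne i j with rfl | hij
  · exact Commute.refl _
  have h := mkRK_eq_zero_of_mem_relators (K := K)
    (mem_relators_of_ne hij (x := genT R m i * genT R m j - genT R m j * genT R m i) (by simp))
  simpa [Commute, SemiconjBy, t, sub_eq_zero] using h

theorem mkRK_uMon_of_notMem {σ : Finset (Fin m)} (hσ : σ ∉ K) : mkRK R m K (uMon R m σ) = 0 :=
  mkRK_eq_zero_of_mem_relators (Or.inr ⟨σ, hσ, rfl⟩)

theorem mkRK_uMon (σ : Finset (Fin m)) :
    mkRK R m K (uMon R m σ) = ((σ.sort (· ≤ ·)).map (u R K)).prod := by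
  rw [uMon, map_list_prod, List.map_map]
  rfl

theorem mkRK_tMon (τ : Finset (Fin m)) :
    mkRK R m K (tMon R m τ) = ((τ.sort (· ≤ ·)).map (t R K)).prod := by
  rw [tMon, map_list_prod, List.map_map]
  rfl

theorem uMon_insert_of_forall_lt {a : Fin m} {s : Finset (Fin m)} (h : ∀ x ∈ s, a < x) :
    uMon R m (insert a s) = genU R m a * uMon R m s := by
  rw [uMon, Finset.sort_insert _ (fun x hx => (h x hx).le) fun ha => lt_irrefl a (h a ha)]
  rfl

theorem exists_u_mul_u_eq_smul (i j : Fin m) :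
    ∃ c : R, u R K i * u R K j = c • (u R K j * u R K i) := by
  rcases eq_or_ne i j with rfl | hij
  · exact ⟨1, (one_smul R _).symm⟩
  · exact ⟨-1, by rw [u_mul_u_of_ne hij, Algebra.smul_def]; simp⟩

theorem exists_mkRK_uMon_eq_smul_of_perm {σ : Finset (Fin m)} {l : List (Fin m)}
    (h : (σ.sort (· ≤ ·)).Perm l) : ∃ c : R, mkRK R m K (uMon R m σ) = c • (l.map (u R K)).prod :=
  mkRK_uMon (R := R) (K := K) σ ▸ h.exists_prod_map_eq_smul exists_u_mul_u_eq_smul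

theorem u_mul_uMon_of_mem {i : Fin m} {σ : Finset (Fin m)} (hi : i ∈ σ) :
    u R K i * mkRK R m K (uMon R m σ) = 0 := by
  obtain ⟨c, hc⟩ :=
    exists_mkRK_uMon_eq_smul_of_perm (R := R) (K := K) (Finset.sort_perm_cons_sort_erase hi)
  simp [hc, ← mul_assoc, u_mul_self]

theorem exists_u_mul_uMon_of_notMem {i : Fin m} {σ : Finset (Fin m)} (hi : i ∉ σ) :
    ∃ c : R, u R K i * mkRK R m K (uMon R m σ) = c • mkRK R m K (uMon R m (insert i σ)) := by
  rw [mkRK_uMon, mkRK_uMon, ← List.prod_cons, ← List.map_cons]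
  exact (Finset.sort_insert_perm hi).symm.exists_prod_map_eq_smul exists_u_mul_u_eq_smul

theorem t_mul_uMon_of_mem {i : Fin m} {σ : Finset (Fin m)} (hi : i ∈ σ) :
    t R K i * mkRK R m K (uMon R m σ) = -mkRK R m K (uMon R m σ) := by
  obtain ⟨c, hc⟩ :=
    exists_mkRK_uMon_eq_smul_of_perm (R := R) (K := K) (Finset.sort_perm_cons_sort_erase hi)
  simp [hc, ← mul_assoc, t_mul_u_self]

theorem uMon_mul_t_of_mem {i : Fin m} {σ : Finset (Fin m)} (hi : i ∈ σ) :
    mkRK R m K (uMon R m σ) * t R K i = mkRK R m K (uMon R m σ) := by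
  obtain ⟨c, hc⟩ := exists_mkRK_uMon_eq_smul_of_perm (R := R) (K := K)
    ((Finset.sort_perm_cons_sort_erase hi).trans (List.perm_append_singleton _ _).symm)
  simp [hc, mul_assoc, u_mul_t_self]

theorem commute_t_uMon_of_notMem {i : Fin m} {σ : Finset (Fin m)} (hi : i ∉ σ) :
    Commute (t R K i) (mkRK R m K (uMon R m σ)) := by
  rw [mkRK_uMon]
  refine Commute.list_prod_right _ _ fun x hx => ?_
  obtain ⟨j, hj, rfl⟩ := List.mem_map.1 hx
  exact (commute_u_t_of_ne fun h : j = i => hi (h ▸ (Finset.mem_sort _).1 hj)).symm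

theorem mkRK_tMon_insert {i : Fin m} {τ : Finset (Fin m)} (hi : i ∉ τ) :
    mkRK R m K (tMon R m (insert i τ)) = t R K i * mkRK R m K (tMon R m τ) := by
  rw [mkRK_tMon, mkRK_tMon, ← List.prod_cons, ← List.map_cons]
  exact ((Finset.sort_insert_perm hi).map _).prod_eq'
    (List.pairwise_map.2 (List.pairwise_of_forall commute_t_t))

theorem t_mul_tMon_of_mem {i : Fin m} {τ : Finset (Fin m)} (hi : i ∈ τ) :
    t R K i * mkRK R m K (tMon R m τ) = mkRK R m K (tMon R m (τ.erase i)) := by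
  conv_lhs => rw [← Finset.insert_erase hi, mkRK_tMon_insert (Finset.notMem_erase i τ)]
  rw [← mul_assoc, t_mul_self, one_mul]

theorem uMon_mul_tMon_erase {i : Fin m} {ρ : Finset (Fin m)} (hi : i ∈ ρ) (τ : Finset (Fin m)) :
    mkRK R m K (uMon R m ρ) * mkRK R m K (tMon R m τ) =
      mkRK R m K (uMon R m ρ) * mkRK R m K (tMon R m (τ.erase i)) := by
  by_cases hiτ : i ∈ τ
  · conv_lhs => rw [← Finset.insert_erase hiτ, mkRK_tMon_insert (Finset.notMem_erase i τ)]
    rw [← mul_assoc, uMon_mul_t_of_mem hi]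
  · rw [Finset.erase_eq_of_notMem hiτ]

variable (K) in
abbrev FacePair : Type := {p : Finset (Fin m) × Finset (Fin m) // p.1 ⊆ p.2 ∧ p.1 ∈ K}

variable (R K) in
def monomial (p : Finset (Fin m) × Finset (Fin m)) : RK R m K :=
  mkRK R m K (uMon R m p.1 * tMon R m (p.2 \ p.1))

variable (R K) in
abbrev monomials : Set (RK R m K) := Set.range fun p : FacePair K => monomial R K p.1

theorem monomial_mem_span (p : FacePair K) :
    monomial R K p.1 ∈ Submodule.span R (monomials R K) :=
  Submodule.subset_span ⟨p, rfl⟩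

theorem monomial_empty : monomial R K (∅, ∅) = 1 := by
  simp [monomial, uMon, tMon]

theorem t_mul_monomial_mem_span (i : Fin m) (p : FacePair K) :
    t R K i * monomial R K p.1 ∈ Submodule.span R (monomials R K) := by
  obtain ⟨⟨σ, ω⟩, hσω, hσK⟩ := p
  rw [monomial, map_mul, ← mul_assoc]
  by_cases hiσ : i ∈ σ
  · rw [t_mul_uMon_of_mem hiσ, neg_mul, ← map_mul]
    exact (Submodule.span R (monomials R K)).neg_mem (monomial_mem_span ⟨(σ, ω), hσω, hσK⟩)
  rw [(commute_t_uMon_of_notMem hiσ).eq, mul_assoc]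
  by_cases hiω : i ∈ ω
  · rw [t_mul_tMon_of_mem (Finset.mem_sdiff.2 ⟨hiω, hiσ⟩), ← Finset.erase_sdiff_comm, ← map_mul]
    exact monomial_mem_span ⟨(σ, ω.erase i), Finset.subset_erase.2 ⟨hσω, hiσ⟩, hσK⟩
  · rw [← mkRK_tMon_insert (fun h => hiω (Finset.mem_sdiff.1 h).1),
      ← Finset.insert_sdiff_of_notMem _ hiσ, ← map_mul]
    exact monomial_mem_span ⟨(σ, insert i ω), hσω.trans (Finset.subset_insert i ω), hσK⟩

theorem u_mul_monomial_mem_span (i : Fin m) (p : FacePair K) :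
    u R K i * monomial R K p.1 ∈ Submodule.span R (monomials R K) := by
  obtain ⟨⟨σ, ω⟩, hσω, hσK⟩ := p
  rw [monomial, map_mul, ← mul_assoc]
  by_cases hiσ : i ∈ σ
  · rw [u_mul_uMon_of_mem hiσ, zero_mul]
    exact zero_mem _
  obtain ⟨c, hc⟩ := exists_u_mul_uMon_of_notMem (R := R) (K := K) hiσ
  rw [hc, smul_mul_assoc]
  by_cases hiK : insert i σ ∈ K
  · rw [uMon_mul_tMon_erase (Finset.mem_insert_self i σ), ← Finset.sdiff_insert,
      ← Finset.insert_sdiff_insert, ← map_mul]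
    exact Submodule.smul_mem _ c
      (monomial_mem_span ⟨(insert i σ, insert i ω), Finset.insert_subset_insert i hσω, hiK⟩)
  · rw [mkRK_uMon_of_notMem hiK, zero_mul, smul_zero]
    exact zero_mem _

theorem span_monomials_eq_top (hK₀ : ∅ ∈ K) :
    Submodule.span R (monomials R K) = ⊤ := by
  refine Submodule.span_eq_top_of_ι_mul_mem (RingQuot.mkAlgHom_surjective R (relRK R m K))
    (monomial_empty (R := R) (K := K) ▸ monomial_mem_span ⟨(∅, ∅), subset_rfl, hK₀⟩) ?_
  rintro (i | i) _ ⟨p, rfl⟩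
  · exact u_mul_monomial_mem_span i p
  · exact t_mul_monomial_mem_span i p

section Representation

open scoped Classical

-- The sign picked up by `u_i` when it moves past the `u_j`, `j ∈ σ`, `j < i`, into its place
-- in `u_σ`.
variable (R) in
def insertSign (i : Fin m) (σ : Finset (Fin m)) : R := (-1) ^ (σ.filter (· < i)).card

theorem insertSign_insert_of_lt {i j : Fin m} (h : j < i) {σ : Finset (Fin m)} (hj : j ∉ σ) :
    insertSign R i (insert j σ) = -insertSign R i σ := by
  rw [insertSign, Finset.filter_insert, if_pos h, Finset.card_insert_of_notMem (by simp [hj]),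
    pow_succ, mul_neg_one, insertSign]

theorem insertSign_insert_of_not_lt {i j : Fin m} (h : ¬j < i) (σ : Finset (Fin m)) :
    insertSign R i (insert j σ) = insertSign R i σ := by
  rw [insertSign, Finset.filter_insert, if_neg h, insertSign]

theorem insertSign_of_forall_le {i : Fin m} {σ : Finset (Fin m)} (h : ∀ j ∈ σ, i ≤ j) :
    insertSign R i σ = 1 := by
  rw [insertSign, Finset.filter_false_of_mem fun j hj => not_lt.2 (h j hj), Finset.card_empty,
    pow_zero]

theorem insertSign_mul_add_insertSign_mul {i j : Fin m} (hij : i ≠ j) {σ : Finset (Fin m)}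
    (hi : i ∉ σ) (hj : j ∉ σ) :
    insertSign R j σ * insertSign R i (insert j σ) +
      insertSign R i σ * insertSign R j (insert i σ) = 0 := by
  rcases hij.lt_or_gt with h | h
  · rw [insertSign_insert_of_lt h hi, insertSign_insert_of_not_lt (not_lt.2 h.le)]
    ring
  · rw [insertSign_insert_of_lt h hj, insertSign_insert_of_not_lt (not_lt.2 h.le)]
    ring

-- `e_(σ, ω)` stands for `u_σ t_{ω ∖ σ}`; `uAct i` and `tAct i` are left multiplication by `u_i`
-- and `t_i` in this model.
variable (R K) in
def uAct (i : Fin m) : Module.End R (Finset (Fin m) × Finset (Fin m) →₀ R) :=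
  Finsupp.linearCombination R fun p =>
    if i ∉ p.1 ∧ insert i p.1 ∈ K then
      Finsupp.single (insert i p.1, insert i p.2) (insertSign R i p.1)
    else 0

variable (R) in
def tAct (i : Fin m) : Module.End R (Finset (Fin m) × Finset (Fin m) →₀ R) :=
  Finsupp.linearCombination R fun p =>
    if i ∈ p.1 then Finsupp.single p (-1) else Finsupp.single (p.1, p.2 ∆ {i}) 1

theorem uAct_single (i : Fin m) (p : Finset (Fin m) × Finset (Fin m)) (c : R) :
    uAct R K i (Finsupp.single p c) =
      if i ∉ p.1 ∧ insert i p.1 ∈ K then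
        Finsupp.single (insert i p.1, insert i p.2) (c * insertSign R i p.1)
      else 0 := by
  simp only [uAct, Finsupp.linearCombination_single]
  split_ifs <;> simp

theorem tAct_single (i : Fin m) (p : Finset (Fin m) × Finset (Fin m)) (c : R) :
    tAct R i (Finsupp.single p c) =
      if i ∈ p.1 then Finsupp.single p (-c) else Finsupp.single (p.1, p.2 ∆ {i}) c := by
  simp only [tAct, Finsupp.linearCombination_single]
  split_ifs <;> simp

variable (R K) in
def freeAct :
    FreeAlgebra R (Fin m ⊕ Fin m) →ₐ[R] Module.End R (Finset (Fin m) × Finset (Fin m) →₀ R) :=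
  FreeAlgebra.lift R (Sum.elim (uAct R K) (tAct R))

@[simp] theorem freeAct_genU (i : Fin m) : freeAct R K (genU R m i) = uAct R K i := by
  simp [freeAct, genU]

@[simp] theorem freeAct_genT (i : Fin m) : freeAct R K (genT R m i) = tAct R i := by
  simp [freeAct, genT]

theorem uAct_mul_self (i : Fin m) : uAct R K i * uAct R K i = 0 := by
  refine Finsupp.lhom_ext fun ⟨σ, ω⟩ c => ?_
  simp only [Module.End.mul_apply, uAct_single]
  split_ifs <;> simp_all [-Finsupp.single_mul, uAct_single]

theorem uAct_mul_tAct_self (i : Fin m) : uAct R K i * tAct R i = uAct R K i := by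
  refine Finsupp.lhom_ext fun ⟨σ, ω⟩ c => ?_
  simp only [Module.End.mul_apply, tAct_single]
  split_ifs <;> simp_all [-Finsupp.single_mul, uAct_single, Finset.insert_symmDiff_singleton_self]

theorem tAct_mul_uAct_self (i : Fin m) : tAct R i * uAct R K i = -uAct R K i := by
  refine Finsupp.lhom_ext fun ⟨σ, ω⟩ c => ?_
  simp only [Module.End.mul_apply, uAct_single, LinearMap.neg_apply]
  split_ifs <;> simp_all [-Finsupp.single_mul, tAct_single]

theorem tAct_mul_self (i : Fin m) : tAct R i * tAct R i = (1 : Module.End R _) := by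
  refine Finsupp.lhom_ext fun ⟨σ, ω⟩ c => ?_
  simp only [Module.End.mul_apply, tAct_single, Module.End.one_apply]
  split_ifs <;> simp_all [-Finsupp.single_mul, tAct_single]

theorem uAct_mul_tAct_of_ne {i j : Fin m} (hij : i ≠ j) :
    uAct R K i * tAct R j = tAct R j * uAct R K i := by
  refine Finsupp.lhom_ext fun ⟨σ, ω⟩ c => ?_
  simp only [Module.End.mul_apply, tAct_single, uAct_single]
  split_ifs <;> simp_all [-Finsupp.single_mul, tAct_single, uAct_single,
    Finset.insert_symmDiff_singleton_of_ne, Ne.symm hij]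

theorem tAct_mul_tAct_comm (i j : Fin m) : tAct R i * tAct R j = tAct R j * tAct R i := by
  refine Finsupp.lhom_ext fun ⟨σ, ω⟩ c => ?_
  simp only [Module.End.mul_apply, tAct_single]
  split_ifs <;> simp_all [-Finsupp.single_mul, symmDiff_right_comm, tAct_single]

theorem uAct_mul_uAct_add_of_ne (hK : IsLowerSet K) {i j : Fin m} (hij : i ≠ j) :
    uAct R K i * uAct R K j + uAct R K j * uAct R K i = 0 := by
  refine Finsupp.lhom_ext fun ⟨σ, ω⟩ c => ?_
  simp only [LinearMap.add_apply, Module.End.mul_apply, LinearMap.zero_apply]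
  by_cases hi : i ∈ σ
  · simp only [uAct_single]; split_ifs <;> simp_all [-Finsupp.single_mul, uAct_single]
  by_cases hj : j ∈ σ
  · simp only [uAct_single]; split_ifs <;> simp_all [-Finsupp.single_mul, uAct_single]
  by_cases hK' : insert i (insert j σ) ∈ K
  · have hiK : insert i σ ∈ K := hK (Finset.insert_subset_insert _ (Finset.subset_insert _ _)) hK'
    have hjK : insert j σ ∈ K := hK (Finset.subset_insert _ _) hK'
    simp only [uAct_single, hi, hj, hiK, hjK, hK', Finset.mem_insert, hij, Ne.symm hij,
      Finset.insert_comm j i, not_false_eq_true, and_self, or_self, if_true, ← Finsupp.single_add]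
    rw [← Finsupp.single_zero (insert i (insert j σ), insert i (insert j ω))]
    congr 1
    linear_combination c * insertSign_mul_add_insertSign_mul (R := R) hij hi hj
  · simp only [uAct_single]
    split_ifs <;> simp_all [-Finsupp.single_mul, uAct_single, Finset.insert_comm j i]

theorem exists_freeAct_uMon_single (σ ρ ω : Finset (Fin m)) (c : R) :
    ∃ c' : R, freeAct R K (uMon R m σ) (Finsupp.single (ρ, ω) c) =
      Finsupp.single (σ ∪ ρ, σ ∪ ω) c' := by
  induction σ using Finset.induction_on_min with
  | empty => exact ⟨c, by simp [uMon]⟩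
  | insert a s ha ih =>
    obtain ⟨c', hc⟩ := ih
    rw [uMon_insert_of_forall_lt ha, map_mul, Module.End.mul_apply, hc, freeAct_genU,
      uAct_single]
    split_ifs
    · exact ⟨c' * insertSign R a (s ∪ ρ), by rw [Finset.insert_union, Finset.insert_union]⟩
    · exact ⟨0, by simp⟩

theorem freeAct_uMon_of_notMem (hK₀ : ∅ ∈ K) (hK : IsLowerSet K) {σ : Finset (Fin m)}
    (hσ : σ ∉ K) : freeAct R K (uMon R m σ) = 0 := by
  induction σ using Finset.induction_on_min with
  | empty => exact absurd hK₀ hσ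
  | insert a s ha _ =>
    refine Finsupp.lhom_ext fun ⟨ρ, ω⟩ c => ?_
    obtain ⟨c', hc⟩ := exists_freeAct_uMon_single (K := K) s ρ ω c
    have hnot : insert a (s ∪ ρ) ∉ K := fun h =>
      hσ (hK (by rw [← Finset.insert_union]; exact Finset.subset_union_left) h)
    rw [uMon_insert_of_forall_lt ha, map_mul, Module.End.mul_apply, hc, freeAct_genU, uAct_single,
      if_neg (by simp [hnot]), LinearMap.zero_apply]

theorem freeAct_eq_zero_of_mem_relators (hK₀ : ∅ ∈ K) (hK : IsLowerSet K)
    {x : FreeAlgebra R (Fin m ⊕ Fin m)} (hx : x ∈ relators R m K) : freeAct R K x = 0 := by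
  rcases hx with (hx | hx) | ⟨σ, hσ, rfl⟩
  · obtain ⟨i, hx⟩ := Set.mem_iUnion.1 hx
    rcases hx with rfl | rfl | rfl | rfl
    · simp [uAct_mul_self]
    · simp [uAct_mul_tAct_self]
    · rw [map_add, map_mul, freeAct_genT, freeAct_genU, tAct_mul_uAct_self]
      exact neg_add_cancel (uAct R K i)
    · simp [tAct_mul_self]
  · simp only [Set.mem_iUnion] at hx
    obtain ⟨i, j, hij, hx⟩ := hx
    rcases hx with rfl | rfl | rfl <;>
      simp [uAct_mul_uAct_add_of_ne hK hij, uAct_mul_tAct_of_ne hij, tAct_mul_tAct_comm]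
  · exact freeAct_uMon_of_notMem hK₀ hK hσ

variable (R K) in
def toEnd (hK₀ : ∅ ∈ K) (hK : IsLowerSet K) :
    RK R m K →ₐ[R] Module.End R (Finset (Fin m) × Finset (Fin m) →₀ R) :=
  RingQuot.liftAlgHom R ⟨freeAct R K, fun _ _ ⟨hx, hy⟩ => by
    rw [hy, freeAct_eq_zero_of_mem_relators hK₀ hK hx, map_zero]⟩

theorem toEnd_mkRK (hK₀ : ∅ ∈ K) (hK : IsLowerSet K) (x : FreeAlgebra R (Fin m ⊕ Fin m)) :
    toEnd R K hK₀ hK (mkRK R m K x) = freeAct R K x :=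
  RingQuot.liftAlgHom_mkAlgHom_apply R _ _ x

theorem freeAct_uMon_single_empty (hK : IsLowerSet K) {σ : Finset (Fin m)} (hσ : σ ∈ K)
    (ω : Finset (Fin m)) :
    freeAct R K (uMon R m σ) (Finsupp.single (∅, ω) 1) = Finsupp.single (σ, σ ∪ ω) 1 := by
  induction σ using Finset.induction_on_min with
  | empty => simp [uMon]
  | insert a s ha ih =>
    have has : a ∉ s := fun h => lt_irrefl a (ha a h)
    rw [uMon_insert_of_forall_lt ha, map_mul, Module.End.mul_apply,
      ih (hK (Finset.subset_insert a s) hσ), freeAct_genU, uAct_single, if_pos ⟨has, hσ⟩,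
      insertSign_of_forall_le fun x hx => (ha x hx).le, mul_one, Finset.insert_union]

theorem toEnd_mkRK_tMon_single_empty (hK₀ : ∅ ∈ K) (hK : IsLowerSet K) (τ : Finset (Fin m)) :
    toEnd R K hK₀ hK (mkRK R m K (tMon R m τ)) (Finsupp.single (∅, ∅) 1) =
      Finsupp.single (∅, τ) 1 := by
  induction τ using Finset.induction_on with
  | empty => simp [tMon]
  | insert a s ha ih =>
    rw [mkRK_tMon_insert ha, map_mul, Module.End.mul_apply, ih, t, toEnd_mkRK, freeAct_genT,
      tAct_single, if_neg (Finset.notMem_empty a)]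
    congr
    ext x
    by_cases x = a <;> simp [*, Finset.mem_symmDiff]

theorem toEnd_monomial_single_empty (hK₀ : ∅ ∈ K) (hK : IsLowerSet K) (p : FacePair K) :
    toEnd R K hK₀ hK (monomial R K p.1) (Finsupp.single (∅, ∅) 1) = Finsupp.single p.1 1 := by
  obtain ⟨⟨σ, ω⟩, hσω, hσK⟩ := p
  rw [monomial, map_mul, map_mul, Module.End.mul_apply, toEnd_mkRK_tMon_single_empty, toEnd_mkRK,
    freeAct_uMon_single_empty hK hσK, Finset.union_sdiff_of_subset hσω]

theorem linearIndependent_monomial (hK₀ : ∅ ∈ K) (hK : IsLowerSet K) :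
    LinearIndependent R fun p : FacePair K => monomial R K p.1 := by
  refine LinearIndependent.of_comp
    (LinearMap.applyₗ (Finsupp.single (∅, ∅) 1) ∘ₗ (toEnd R K hK₀ hK).toLinearMap) ?_
  convert (Finsupp.linearIndependent_single_one R _).comp Subtype.val Subtype.val_injective
  exact funext (toEnd_monomial_single_empty (R := R) hK₀ hK)

end Representation

end RK

theorem RK_free_basis_of_monomials
    (K : Set (Finset (Fin m))) (hK₀ : ∅ ∈ K)
    (hKdown : ∀ σ τ : Finset (Fin m), σ ⊆ τ → τ ∈ K → σ ∈ K) :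
    ∃ b : Module.Basis {p : Finset (Fin m) × Finset (Fin m) // p.1 ⊆ p.2 ∧ p.1 ∈ K}
        R (RK R m K),
      ∀ p, b p = mkRK R m K (uMon R m p.1.1 * tMon R m (p.1.2 \ p.1.1)) := by
  have hK : IsLowerSet K := fun τ σ h hτ => hKdown σ τ h hτ
  exact ⟨Module.Basis.mk (RK.linearIndependent_monomial hK₀ hK) (RK.span_monomials_eq_top hK₀).ge,
    Module.Basis.mk_apply _ _⟩

end
end

section
/- Let V be a type and let K be a set of finite subsets of V that is closed under taking subsets, and suppose K is flag: whenever S is a finite subset of V such that every subset of S of cardinality at most 2 belongs to K, then S itself belongs to K. Let F ∈ K be a facet of K, i.e. a face that is maximal under inclusion among members of K. If v and v' are two distinct elements of F, and w ∉ F is such that both (F ∖ {v}) ∪ {w} ∈ K and (F ∖ {v'}) ∪ {w} ∈ K, then a contradiction follows (such a configuration is impossible). -/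
theorem flag_facet_opposite_vertices_distinct
    (V : Type*) [DecidableEq V] (K : Set (Finset V))
    (hdown : ∀ s t : Finset V, s ⊆ t → t ∈ K → s ∈ K)
    (hflag : ∀ S : Finset V, (∀ s ⊆ S, s.card ≤ 2 → s ∈ K) → S ∈ K)
    (F : Finset V) (hF : F ∈ K)
    (hFmax : ∀ G ∈ K, F ⊆ G → G = F)
    (v v' : V) (hv : v ∈ F) (hv' : v' ∈ F) (hvv' : v ≠ v')
    (w : V) (hw : w ∉ F)
    (h1 : (F \ {v}) ∪ {w} ∈ K) (h2 : (F \ {v'}) ∪ {w} ∈ K) : False := by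
  have hK : F ∪ {w} ∈ K := by
    apply hflag
    intro s hs hcard
    by_cases hws : w ∈ s
    · -- s can't contain both v and v'
      have hnot : v ∉ s ∨ v' ∉ s := by
        by_contra h
        push_neg at h
        have hsub : ({w, v, v'} : Finset V) ⊆ s := by
          intro x hx
          simp only [Finset.mem_insert, Finset.mem_singleton] at hx
          rcases hx with rfl | rfl | rfl
          · exact hws
          · exact h.1
          · exact h.2
        have hc : ({w, v, v'} : Finset V).card = 3 := by
          rw [Finset.card_insert_of_notMem, Finset.card_insert_of_notMem,
            Finset.card_singleton]
          · simp [hvv']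
          · simp only [Finset.mem_insert, Finset.mem_singleton]
            rintro (rfl | rfl) <;> [exact hw hv; exact hw hv']
        have := Finset.card_le_card hsub
        omega
      rcases hnot with hvs | hvs
      · refine hdown s _ ?_ h1
        intro x hx
        rcases Finset.mem_union.mp (hs hx) with hxF | hxw
        · exact Finset.mem_union_left _ (Finset.mem_sdiff.mpr ⟨hxF, by
            simp only [Finset.mem_singleton]; rintro rfl; exact hvs hx⟩)
        · exact Finset.mem_union_right _ hxw
      · refine hdown s _ ?_ h2
        intro x hx
        rcases Finset.mem_union.mp (hs hx) with hxF | hxw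
        · exact Finset.mem_union_left _ (Finset.mem_sdiff.mpr ⟨hxF, by
            simp only [Finset.mem_singleton]; rintro rfl; exact hvs hx⟩)
        · exact Finset.mem_union_right _ hxw
    · refine hdown s F ?_ hF
      intro x hx
      rcases Finset.mem_union.mp (hs hx) with h | h
      · exact h
      · exact absurd (Finset.mem_singleton.mp h ▸ hx) hws
  have := hFmax _ hK Finset.subset_union_left
  apply hw
  rw [← this]
  exact Finset.mem_union_right _ (Finset.mem_singleton_self w)
end

section
/- Let V be a type and let K be a set of finite subsets of V that is closed under taking subsets, and suppose K is flag: whenever S is a finite subset of V such that every subset of S of cardinality at most 2 belongs to K, then S itself belongs to K. Let n ≥ 1, let v : Fin n → V be an injective family whose image F = {v 1, …, v n} is a facet of K (a face maximal under inclusion), and for each i : Fin n let w i be a vertex with w i ∉ F and (F ∖ {v i}) ∪ {w i} ∈ K. Then there exists a function ℓ, defined on the vertices of K not belonging to F (elements u with {u} ∈ K and u ∉ F), with values in Fin n, such that ℓ (w i) = i for every i, and for every vertex u ∉ F and every i : Fin n, if {u, v i} ∈ K then ℓ u ≠ i. -/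
theorem flag_facet_exists_labeling
    (V : Type*) [DecidableEq V] (K : Set (Finset V))
    (hdown : ∀ s t : Finset V, s ⊆ t → t ∈ K → s ∈ K)
    (hflag : ∀ S : Finset V, (∀ s ⊆ S, s.card ≤ 2 → s ∈ K) → S ∈ K)
    (n : ℕ) (hn : 1 ≤ n)
    (v : Fin n → V) (hvinj : Function.Injective v)
    (F : Finset V) (hFv : F = Finset.image v Finset.univ)
    (hF : F ∈ K) (hFmax : ∀ G ∈ K, F ⊆ G → G = F)
    (w : Fin n → V) (hwK : ∀ i : Fin n, ({w i} : Finset V) ∈ K)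
    (hwF : ∀ i : Fin n, w i ∉ F)
    (hwface : ∀ i : Fin n, (F \ {v i}) ∪ {w i} ∈ K) :
    ∃ ℓ : V → Fin n,
      (∀ i : Fin n, ℓ (w i) = i) ∧
      (∀ u : V, ({u} : Finset V) ∈ K → u ∉ F →
        ∀ i : Fin n, ({u, v i} : Finset V) ∈ K → ℓ u ≠ i) := by
  classical
  -- Key: every vertex outside F has a non-neighbor among the v i.
  have key : ∀ u : V, ({u} : Finset V) ∈ K → u ∉ F →
      ∃ i : Fin n, ({u, v i} : Finset V) ∉ K := by
    intro u hu huF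
    by_contra hcon
    push_neg at hcon
    have hins : insert u F ∈ K := by
      apply hflag
      intro s hs hcard
      by_cases hus : u ∈ s
      · have herase : s.erase u ⊆ F := by
          intro x hx
          have hx' := Finset.mem_of_mem_erase hx
          have hxu := Finset.ne_of_mem_erase hx
          rcases Finset.mem_insert.mp (hs hx') with h | h
          · exact absurd h hxu
          · exact h
        rcases Finset.eq_empty_or_nonempty (s.erase u) with he | ⟨x, hx⟩
        · have : s = {u} := by
            apply Finset.eq_singleton_iff_unique_mem.mpr
            refine ⟨hus, fun y hy => ?_⟩
            by_contra hyu
            exact (Finset.notMem_empty y) (he ▸ Finset.mem_erase.mpr ⟨hyu, hy⟩)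
          exact this ▸ hu
        · have hxF : x ∈ F := herase hx
          obtain ⟨i, _, hi⟩ := Finset.mem_image.mp (hFv ▸ hxF)
          have hsub : s ⊆ {u, v i} := by
            intro y hy
            by_cases hyu : y = u
            · simp [hyu]
            · have hye : y ∈ s.erase u := Finset.mem_erase.mpr ⟨hyu, hy⟩
              have : ({x} : Finset V) ⊆ s.erase u := Finset.singleton_subset_iff.mpr hx
              have hcard2 : (s.erase u).card ≤ 1 := by
                have := Finset.card_erase_of_mem hus
                omega
              have : s.erase u = {x} := by
                symm
                apply Finset.eq_of_subset_of_card_le this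
                simpa using hcard2
              have : y = x := by
                have := this ▸ hye
                simpa using this
              simp [this, ← hi]
          exact hdown _ _ hsub (hcon i)
      · have hsF : s ⊆ F := by
          intro x hx
          rcases Finset.mem_insert.mp (hs hx) with h | h
          · exact absurd (h ▸ hx) hus
          · exact h
        exact hdown _ _ hsF hF
    have := hFmax _ hins (Finset.subset_insert u F)
    exact huF (this ▸ Finset.mem_insert_self u F)
  refine ⟨fun u => if h : ∃ i : Fin n, ({u, v i} : Finset V) ∉ K
            then h.choose else ⟨0, hn⟩, ?_, ?_⟩
  · intro i
    have hex : ∃ j : Fin n, ({w i, v j} : Finset V) ∉ K := key (w i) (hwK i) (hwF i)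
    simp only [dif_pos hex]
    by_contra hne
    apply hex.choose_spec
    apply hdown _ _ ?_ (hwface i)
    intro x hx
    rcases Finset.mem_insert.mp hx with h | h
    · exact Finset.mem_union_right _ (h ▸ Finset.mem_singleton_self _)
    · have hxv : x = v hex.choose := by simpa using h
      apply Finset.mem_union_left
      apply Finset.mem_sdiff.mpr
      constructor
      · rw [hxv, hFv]; exact Finset.mem_image_of_mem v (Finset.mem_univ _)
      · simp only [Finset.mem_singleton]
        rw [hxv]
        intro hcontra
        exact hne (hvinj hcontra)
  · intro u hu huF i hK
    have hex := key u hu huF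
    simp only [dif_pos hex]
    intro heq
    exact hex.choose_spec (heq ▸ hK)
end

section
/- Work in the ZMod 2-vector space of functions Fin 17 → ZMod 2, with coordinates indexed 0, 1, …, 16. Let W₁ be the span of the four vectors given by the indicator functions of the sets {0}, {1,2,3,4,5,6,7,8,9,10}, {3,4,5,6,7,8,11,12,13,14}, and {5,6,7,8,9,10,13,14,15,16}; and let W₂ be the span of the indicator functions of the sets {0}, {1,2,3,4,5,6,7,8,9,10}, {2,3,4,5,6,7,11,12,13,14}, and {5,6,7,8,9,10,13,14,15,16}. For a subspace W of (Fin 17 → ZMod 2), call a finite set S ⊆ Fin 17 W-dependent if there exists a nonzero c ∈ W whose support {i | c i ≠ 0} is contained in S. Then there is no permutation σ of Fin 17 such that for every finite set S ⊆ Fin 17, S is W₁-dependent if and only if the image of S under σ is W₂-dependent. -/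
/-- Indicator function of a finite subset of `Fin 17` as a vector over `ZMod 2`. -/
def indVec (S : Finset (Fin 17)) : Fin 17 → ZMod 2 :=
  fun i => if i ∈ S then 1 else 0

/-- The relation space of the first binary matroid. -/
def W₁ : Submodule (ZMod 2) (Fin 17 → ZMod 2) :=
  Submodule.span (ZMod 2)
    {indVec {0},
     indVec {1, 2, 3, 4, 5, 6, 7, 8, 9, 10},
     indVec {3, 4, 5, 6, 7, 8, 11, 12, 13, 14},
     indVec {5, 6, 7, 8, 9, 10, 13, 14, 15, 16}}

/-- The relation space of the second binary matroid. -/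
def W₂ : Submodule (ZMod 2) (Fin 17 → ZMod 2) :=
  Submodule.span (ZMod 2)
    {indVec {0},
     indVec {1, 2, 3, 4, 5, 6, 7, 8, 9, 10},
     indVec {2, 3, 4, 5, 6, 7, 11, 12, 13, 14},
     indVec {5, 6, 7, 8, 9, 10, 13, 14, 15, 16}}

/-- `S` is `W`-dependent if some nonzero relation vector of `W` has support
contained in `S`. -/
def IsDep (W : Submodule (ZMod 2) (Fin 17 → ZMod 2)) (S : Finset (Fin 17)) : Prop :=
  ∃ c ∈ W, c ≠ 0 ∧ ∀ i : Fin 17, c i ≠ 0 → i ∈ S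

/-- The support of a vector, as a finset. -/
def suppF (c : Fin 17 → ZMod 2) : Finset (Fin 17) :=
  Finset.univ.filter (fun i => c i ≠ 0)

lemma mem_span4 {a b c d x : Fin 17 → ZMod 2}
    (h : x ∈ Submodule.span (ZMod 2) {a, b, c, d}) :
    ∃ p q r s : ZMod 2, x = p • a + (q • b + (r • c + s • d)) := by
  rw [Submodule.mem_span_insert] at h
  obtain ⟨p, y, hy, rfl⟩ := h
  rw [Submodule.mem_span_insert] at hy
  obtain ⟨q, z, hz, rfl⟩ := hy
  rw [Submodule.mem_span_insert] at hz
  obtain ⟨r, w, hw, rfl⟩ := hz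
  rw [Submodule.mem_span_singleton] at hw
  obtain ⟨s, rfl⟩ := hw
  exact ⟨p, q, r, s, rfl⟩

/-- Every element of `W₂` is zero, the loop vector, or has large support with the
possible small (size-8) supports listed explicitly. -/
lemma keyW₂ : ∀ p q r s : ZMod 2,
    (fun c : Fin 17 → ZMod 2 => c = 0 ∨ c = indVec {0} ∨
      (2 ≤ (suppF c).card ∧ (c 0 = 0 →
        suppF c = ({1,8,9,10,11,12,13,14} : Finset (Fin 17)) ∨
        suppF c = {1,2,3,4,13,14,15,16} ∨
        suppF c = {1,5,6,7,11,12,15,16} ∨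
        9 ≤ (suppF c).card)))
      (p • indVec {0} + (q • indVec {1,2,3,4,5,6,7,8,9,10} +
       (r • indVec {2,3,4,5,6,7,11,12,13,14} +
        s • indVec {5,6,7,8,9,10,13,14,15,16}))) := by
  decide

lemma W₂_struct {c : Fin 17 → ZMod 2} (h : c ∈ W₂) :
    c = 0 ∨ c = indVec {0} ∨
      (2 ≤ (suppF c).card ∧ (c 0 = 0 →
        suppF c = ({1,8,9,10,11,12,13,14} : Finset (Fin 17)) ∨
        suppF c = {1,2,3,4,13,14,15,16} ∨
        suppF c = {1,5,6,7,11,12,15,16} ∨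
        9 ≤ (suppF c).card)) := by
  rw [W₂] at h
  obtain ⟨p, q, r, s, rfl⟩ := mem_span4 h
  exact keyW₂ p q r s

theorem matroids_not_isomorphic :
    ¬ ∃ σ : Equiv.Perm (Fin 17),
        ∀ S : Finset (Fin 17), IsDep W₁ S ↔ IsDep W₂ (S.image σ) := by
  rintro ⟨σ, hσ⟩
  -- Step 1: σ 0 = 0
  have hdep0 : IsDep W₁ {0} := by
    refine ⟨indVec {0}, Submodule.subset_span (by left; rfl), ?_, ?_⟩
    · decide
    · decide
  have h0' := (hσ {0}).mp hdep0
  rw [Finset.image_singleton] at h0'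
  obtain ⟨c, hcW, hc0, hcs⟩ := h0'
  have hσ0 : σ 0 = 0 := by
    rcases W₂_struct hcW with h | h | ⟨h2, _⟩
    · exact absurd h hc0
    · subst h
      have : (0 : Fin 17) ∈ ({σ 0} : Finset (Fin 17)) := hcs 0 (by decide)
      exact (Finset.mem_singleton.mp this).symm
    · exfalso
      have hsub : suppF c ⊆ {σ 0} := fun i hi =>
        hcs i (by simpa [suppF] using hi)
      have := Finset.card_le_card hsub
      simp at this
      omega
  -- the two 8-circuits of W₁
  set A : Finset (Fin 17) := {1,2,9,10,11,12,13,14} with hA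
  set B : Finset (Fin 17) := {1,2,3,4,13,14,15,16} with hB
  -- generic step: image of an 8-circuit is one of the three 8-circuits of W₂
  have main : ∀ S : Finset (Fin 17), IsDep W₁ S → S.card = 8 → (0 : Fin 17) ∉ S →
      S.image σ = ({1,8,9,10,11,12,13,14} : Finset (Fin 17)) ∨
      S.image σ = {1,2,3,4,13,14,15,16} ∨
      S.image σ = {1,5,6,7,11,12,15,16} := by
    intro S hdep hcard h0S
    obtain ⟨c, hcW, hc0, hcs⟩ := (hσ S).mp hdep
    have hsub : suppF c ⊆ S.image σ := fun i hi =>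
      hcs i (by simpa [suppF] using hi)
    have hcardim : (S.image σ).card = 8 := by
      rw [Finset.card_image_of_injective _ σ.injective, hcard]
    have h0im : (0 : Fin 17) ∉ S.image σ := by
      intro h
      obtain ⟨a, haS, hae⟩ := Finset.mem_image.mp h
      rw [← hσ0] at hae
      exact h0S (σ.injective hae ▸ haS)
    rcases W₂_struct hcW with h | h | ⟨_, h8⟩
    · exact absurd h hc0
    · exfalso
      subst h
      exact h0im (hcs 0 (by decide))
    · have hc00 : c 0 = 0 := by
        by_contra hne
        exact h0im (hcs 0 hne)
      have hle : (suppF c).card ≤ 8 := hcardim ▸ Finset.card_le_card hsub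
      rcases h8 hc00 with h | h | h | h
      · left
        refine (Finset.eq_of_subset_of_card_le (h ▸ hsub) ?_).symm
        rw [hcardim]; decide
      · right; left
        refine (Finset.eq_of_subset_of_card_le (h ▸ hsub) ?_).symm
        rw [hcardim]; decide
      · right; right
        refine (Finset.eq_of_subset_of_card_le (h ▸ hsub) ?_).symm
        rw [hcardim]; decide
      · omega
  -- A is W₁-dependent
  have hdepA : IsDep W₁ A := by
    refine ⟨indVec {1,2,3,4,5,6,7,8,9,10} + indVec {3,4,5,6,7,8,11,12,13,14},
      Submodule.add_mem _ (Submodule.subset_span (by right; left; rfl))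
        (Submodule.subset_span (by right; right; left; rfl)), ?_, ?_⟩
    · decide
    · decide
  have hdepB : IsDep W₁ B := by
    refine ⟨indVec {1,2,3,4,5,6,7,8,9,10} + indVec {5,6,7,8,9,10,13,14,15,16},
      Submodule.add_mem _ (Submodule.subset_span (by right; left; rfl))
        (Submodule.subset_span (by right; right; right; rfl)), ?_, ?_⟩
    · decide
    · decide
  have hAim := main A hdepA (by decide) (by decide)
  have hBim := main B hdepB (by decide) (by decide)
  -- intersection cardinality is preserved
  have hinter : ((A.image σ) ∩ (B.image σ)).card = 4 := by
    rw [← Finset.image_inter _ _ σ.injective,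
      Finset.card_image_of_injective _ σ.injective]
    decide
  rcases hAim with hA' | hA' | hA' <;> rcases hBim with hB' | hB' | hB' <;>
    rw [hA', hB'] at hinter <;> revert hinter <;> decide
end
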